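/- For every k ≥ 0, ω(a·(a-b)^k·b) = (1+y)·(a(a-b)^k·b - (-y)^{k+1}·b(a-b)^k·a) in ℤ[y]⟨a,b⟩. -/

import Mathlib

open Polynomial

noncomputable section

/-- The coefficient ring `ℤ[y]`. -/
abbrev NCR : Type := Polynomial ℤ

/-- The ring `ℤ[y]⟨a,b⟩` of noncommutative polynomials in the letters `a` (encoded `false`)
and `b` (encoded `true`) with coefficients in `ℤ[y]`. -/
abbrev NCPoly : Type := MonoidAlgebra NCR (FreeMonoid Bool)

/-- The variable `a`. -/
def Aa : NCPoly := MonoidAlgebra.of NCR (FreeMonoid Bool) (FreeMonoid.of false)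

/-- The variable `b`. -/
def Bb : NCPoly := MonoidAlgebra.of NCR (FreeMonoid Bool) (FreeMonoid.of true)

/-- The `ω`-transformation on a single `ab`-monomial (word in `a`,`b`): every occurrence of
the factor `ab` is replaced by `(1+y)ab + (y+y²)ba`, and then all remaining occurrences of `a`
are replaced by `a+yb` and of `b` by `b+ya`. -/
def omegaWord : List Bool → NCPoly
  | [] => 1
  | false :: true :: rest =>
      (((1 + X : NCR)) • (Aa * Bb) + ((X + X ^ 2 : NCR)) • (Bb * Aa)) * omegaWord rest
  | false :: rest => (Aa + (X : NCR) • Bb) * omegaWord rest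
  | true :: rest => (Bb + (X : NCR) • Aa) * omegaWord rest

/-- The `ω`-transformation on `ℤ[y]⟨a,b⟩`, extended linearly from `ab`-monomials. -/
def omega (f : NCPoly) : NCPoly :=
  (f.coeff : FreeMonoid Bool →₀ NCR).sum fun w c => c • omegaWord (FreeMonoid.toList w)

/-- The `ι`-transformation on `ℤ[y]⟨a,b⟩`: it removes the initial letter from every
`ab`-monomial (and kills the empty monomial). -/
def iota (f : NCPoly) : NCPoly :=
  (f.coeff : FreeMonoid Bool →₀ NCR).sum fun w c =>
    match FreeMonoid.toList w with
    | [] => 0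
    | _ :: rest => c • MonoidAlgebra.of NCR (FreeMonoid Bool) (FreeMonoid.ofList rest)

/-- `wt_S(a,b) = w_0 ⋯ w_{n-1}` where `w_k = b` if `k ∈ S` and `w_k = a - b` otherwise. -/
def wtS (n : ℕ) (S : Finset ℕ) : NCPoly :=
  ((List.range n).map fun j => if j ∈ S then Bb else Aa - Bb).prod

/-- Evaluation `f(y,a,b) ↦ f(-x,1,x)` used to define (augmented) Chow polynomials. -/
def evalChow (f : NCPoly) : Polynomial ℤ :=
  (f.coeff : FreeMonoid Bool →₀ NCR).sum fun w c =>
    c.comp (-X) * X ^ ((FreeMonoid.toList w).count true)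

/-- The `ab`-monomial `m_T = m_0 ⋯ m_{n-1}` with `m_i = b` if `i ∈ T` and `m_i = a` else. -/
def mT (n : ℕ) (T : Finset ℕ) : FreeMonoid Bool :=
  FreeMonoid.ofList ((List.range n).map fun i => decide (i ∈ T))

variable {P : Type*} [Fintype P] [PartialOrder P]

open Classical in
/-- The Möbius function of a finite poset:
`μ(w,w) = 1` and `μ(u,w) = -∑_{u ≤ v < w} μ(u,v)` for `u ≠ w`. -/
def mobius (u : P) : P → ℤ
  | w =>
    if u = w then 1
    else - ∑ v ∈ (Finset.univ.filter fun v : P => u ≤ v ∧ v < w).attach, mobius u v.1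
  termination_by w => (Finset.univ.filter fun v : P => u ≤ v ∧ v ≤ w).card
  decreasing_by
    have hv := v.2
    simp only [Finset.mem_filter, Finset.mem_univ, true_and] at hv
    apply Finset.card_lt_card
    constructor
    · intro x hx
      simp only [Finset.mem_filter, Finset.mem_univ, true_and] at hx ⊢
      exact ⟨hx.1, hx.2.trans hv.2.le⟩
    · intro hsub
      have hw : w ∈ Finset.univ.filter fun v : P => u ≤ v ∧ v ≤ w := by
        simp only [Finset.mem_filter, Finset.mem_univ, true_and]
        exact ⟨hv.1.trans hv.2.le, le_refl w⟩
      have := hsub hw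
      simp only [Finset.mem_filter, Finset.mem_univ, true_and] at this
      exact absurd (lt_of_le_of_lt this.2 hv.2) (lt_irrefl w)

open Classical in
/-- The Poincaré polynomial of the interval `[u,w]`, with respect to the rank function `rk`:
`Poin_{[u,w]}(y) = ∑_{u ≤ v ≤ w} μ(u,v)·(-y)^{rk(v) - rk(u)}`. -/
def poin (rk : P → ℕ) (u w : P) : Polynomial ℤ :=
  ∑ v ∈ Finset.univ.filter fun v : P => u ≤ v ∧ v ≤ w,
    mobius u v • (-X : Polynomial ℤ) ^ (rk v - rk u)

variable [BoundedOrder P]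

open Classical in
/-- The extended `ab`-index of the interval `[u₀, ⊤]` of `P` (with ranks taken relative
to `u₀`): the sum over all chains `u₀ ≤ C_1 < ⋯ < C_k < C_{k+1} = ⊤` of
`Poin_{P,C}(y)·wt_C(a,b)`. -/
def exPsiFrom (rk : P → ℕ) (u₀ : P) : NCPoly :=
  ∑ k ∈ Finset.range (Fintype.card P),
    ∑ c ∈ Finset.univ.filter fun c : Fin (k + 1) → P =>
        StrictMono c ∧ c (Fin.last k) = (⊤ : P) ∧ u₀ ≤ c 0,
      (∏ i : Fin k, poin rk (c i.castSucc) (c i.succ)) •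
        wtS (rk (⊤ : P) - rk u₀) (Finset.univ.image fun i : Fin k => rk (c i.castSucc) - rk u₀)

open Classical in
/-- The `ab`-index of the interval `[u₀, ⊤]` of `P`: the sum over all chains
`u₀ ≤ C_1 < ⋯ < C_k < C_{k+1} = ⊤` of `wt_C(a,b)`. -/
def psiFrom (rk : P → ℕ) (u₀ : P) : NCPoly :=
  ∑ k ∈ Finset.range (Fintype.card P),
    ∑ c ∈ Finset.univ.filter fun c : Fin (k + 1) → P =>
        StrictMono c ∧ c (Fin.last k) = (⊤ : P) ∧ u₀ ≤ c 0,
      wtS (rk (⊤ : P) - rk u₀) (Finset.univ.image fun i : Fin k => rk (c i.castSucc) - rk u₀)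

/-- `exΨ̃ = ι(exΨ)` for the interval `[u₀, ⊤]`. -/
def exPsiTildeFrom (rk : P → ℕ) (u₀ : P) : NCPoly := iota (exPsiFrom rk u₀)

/-- `Ψ̃ = ι(Ψ)` for the interval `[u₀, ⊤]`. -/
def psiTildeFrom (rk : P → ℕ) (u₀ : P) : NCPoly := iota (psiFrom rk u₀)

open Classical in
/-- The flag `f`-vector `α(S)`: the number of maximal chains of the rank-selected subposet,
i.e. of chains `C_1 < ⋯ < C_k < C_{k+1} = ⊤` with `{rk(C_1), …, rk(C_k)} = S`. -/
def flagAlpha (rk : P → ℕ) (S : Finset ℕ) : ℕ :=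
  ∑ k ∈ Finset.range (Fintype.card P),
    (Finset.univ.filter fun c : Fin (k + 1) → P =>
      StrictMono c ∧ c (Fin.last k) = (⊤ : P) ∧
        (Finset.univ.image fun i : Fin k => rk (c i.castSucc)) = S).card

/-- The flag `h`-vector `β(T) = ∑_{S ⊆ T} (-1)^{|T∖S|} α(S)`. -/
def flagBeta (rk : P → ℕ) (T : Finset ℕ) : ℤ :=
  ∑ S ∈ T.powerset, (-1 : ℤ) ^ (T \ S).card * (flagAlpha rk S : ℤ)

/-- An `R`-labeling of the graded poset `P`: every nontrivial interval `[u,w]` has a unique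
maximal (i.e. saturated) chain with weakly increasing labels. -/
def IsRLabeling (rk : P → ℕ) (lab : P → P → ℤ) : Prop :=
  ∀ u w : P, u < w →
    ∃! c : Fin (rk w - rk u + 1) → P,
      c 0 = u ∧ c (Fin.last (rk w - rk u)) = w ∧
        (∀ i : Fin (rk w - rk u), c i.castSucc ⋖ c i.succ) ∧
        ∀ i j : Fin (rk w - rk u), i ≤ j →
          lab (c i.castSucc) (c i.succ) ≤ lab (c j.castSucc) (c j.succ)

/-- The label sequence `(λ_0, …, λ_n)` of a maximal chain `c` with sign-set `E`:
`λ_0 = 0` and `λ_i = ±λ(c_{i-1}, c_i)`, negative exactly when `i ∈ E`. -/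
def lamSeq {n : ℕ} (lab : P → P → ℤ) (c : Fin (n + 1) → P) (E : Finset ℕ) :
    Fin (n + 1) → ℤ :=
  fun j =>
    if j = 0 then 0
    else (if (j : ℕ) ∈ E then -1 else 1) * lab (c ⟨j.1 - 1, by omega⟩) (c j)

/-- The `ab`-monomial `m(M,E) = m_0 ⋯ m_{n-1}` with `m_i = b` if `λ_i > λ_{i+1}`
and `m_i = a` if `λ_i ≤ λ_{i+1}`. -/
def rlabWord {n : ℕ} (lab : P → P → ℤ) (c : Fin (n + 1) → P) (E : Finset ℕ) :
    FreeMonoid Bool :=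
  FreeMonoid.ofList
    (List.ofFn fun i : Fin n => decide (lamSeq lab c E i.succ < lamSeq lab c E i.castSucc))

end

/-!
ω is `ℤ[y]`-linear, and reading a word from the left it acts letter by letter: a leading `b`
becomes `b + ya`, a leading `aa` contributes `a + yb`, and a leading `ab` becomes
`(1+y)ab + (y+y²)ba`. Hence `F_k = ω(a(a-b)^k b)` and `G_k = ω((a-b)^k b)` satisfy the coupled
recurrence `G_{k+1} = F_k - (b+ya) G_k`, `F_{k+1} = (a+yb) F_k - ((1+y)ab + (y+y²)ba) G_k`,
which is solved jointly, with `G_k = (a-b)^k b - (-y)^{k+1} (a-b)^k a`.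
-/

lemma omega_add (f g : NCPoly) : omega (f + g) = omega f + omega g := by
  unfold omega
  rw [MonoidAlgebra.coeff_add]
  exact Finsupp.sum_add_index' (by simp) (fun _ _ _ => add_smul _ _ _)

lemma omega_smul (c : NCR) (f : NCPoly) : omega (c • f) = c • omega f := by
  unfold omega
  rw [MonoidAlgebra.coeff_smul, Finsupp.sum_smul_index (by simp), Finsupp.smul_sum]
  simp only [mul_smul]

lemma omega_sub (f g : NCPoly) : omega (f - g) = omega f - omega g := by
  rw [sub_eq_add_neg, omega_add, ← neg_one_smul NCR g, omega_smul, neg_one_smul,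
    ← sub_eq_add_neg]

lemma omega_of (w : FreeMonoid Bool) :
    omega (MonoidAlgebra.of NCR (FreeMonoid Bool) w) = omegaWord (FreeMonoid.toList w) := by
  unfold omega
  rw [MonoidAlgebra.of_apply, MonoidAlgebra.coeff_single, Finsupp.sum_single_index (by simp),
    one_smul]

lemma omega_one : omega 1 = 1 := by
  rw [← map_one (MonoidAlgebra.of NCR (FreeMonoid Bool)), omega_of]
  rfl

lemma omega_mul_eq_of_forall_of {x y c : NCPoly}
    (h : ∀ w, omega (x * MonoidAlgebra.of NCR (FreeMonoid Bool) w) =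
      c * omega (y * MonoidAlgebra.of NCR (FreeMonoid Bool) w)) (f : NCPoly) :
    omega (x * f) = c * omega (y * f) := by
  induction f using MonoidAlgebra.induction_on with
  | of w => exact h w
  | add f g hf hg => rw [mul_add, mul_add, omega_add, omega_add, hf, hg, mul_add]
  | smul r f hf => rw [mul_smul_comm, mul_smul_comm, omega_smul, omega_smul, hf, mul_smul_comm]

lemma omega_b_mul (f : NCPoly) : omega (Bb * f) = (Bb + (X : NCR) • Aa) * omega f := by
  simpa only [one_mul] using omega_mul_eq_of_forall_of (x := Bb) (y := 1) (fun w => by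
    conv_lhs => rw [Bb, ← map_mul, omega_of]
    rw [one_mul, omega_of]
    rfl) f

lemma omega_a_a_mul (f : NCPoly) :
    omega (Aa * (Aa * f)) = (Aa + (X : NCR) • Bb) * omega (Aa * f) := by
  rw [← mul_assoc]
  refine omega_mul_eq_of_forall_of (fun w => ?_) f
  conv_lhs => rw [Aa, ← map_mul, ← map_mul, omega_of]
  rw [Aa, ← map_mul, omega_of]
  rfl

lemma omega_a_b_mul (f : NCPoly) :
    omega (Aa * (Bb * f)) =
      ((1 + X : NCR) • (Aa * Bb) + (X + X ^ 2 : NCR) • (Bb * Aa)) * omega f := by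
  simpa only [one_mul, ← mul_assoc] using omega_mul_eq_of_forall_of (x := Aa * Bb) (y := 1)
    (fun w => by
      conv_lhs => rw [Aa, Bb, ← map_mul, ← map_mul, omega_of]
      rw [one_mul, omega_of]
      rfl) f

lemma omega_sub_mul (g : NCPoly) :
    omega ((Aa - Bb) * g) = omega (Aa * g) - (Bb + (X : NCR) • Aa) * omega g := by
  rw [sub_mul, omega_sub, omega_b_mul]

lemma omega_a_mul_sub_mul (g : NCPoly) :
    omega (Aa * ((Aa - Bb) * g)) =
      (Aa + (X : NCR) • Bb) * omega (Aa * g) -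
        ((1 + X : NCR) • (Aa * Bb) + (X + X ^ 2 : NCR) • (Bb * Aa)) * omega g := by
  rw [sub_mul, mul_sub, omega_sub, omega_a_a_mul, omega_a_b_mul]

lemma omega_a_mul_pow_sub_mul_b_and_omega_pow_sub_mul_b (k : ℕ) :
    omega (Aa * ((Aa - Bb) ^ k * Bb)) =
        (1 + X : NCR) • (Aa * ((Aa - Bb) ^ k * Bb) -
          ((-X : NCR) ^ (k + 1)) • (Bb * ((Aa - Bb) ^ k * Aa))) ∧
      omega ((Aa - Bb) ^ k * Bb) =
        (Aa - Bb) ^ k * Bb - ((-X : NCR) ^ (k + 1)) • ((Aa - Bb) ^ k * Aa) := by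
  induction k with
  | zero =>
    have hF := omega_a_b_mul 1
    have hG := omega_b_mul 1
    simp only [mul_one, omega_one] at hF hG
    simp only [pow_zero, one_mul, zero_add, pow_one, hF, hG]
    constructor <;> module
  | succ k ih =>
    obtain ⟨hF, hG⟩ := ih
    simp only [pow_succ', mul_assoc]
    rw [omega_a_mul_sub_mul, omega_sub_mul, hF, hG]
    simp only [mul_sub, sub_mul, add_mul, smul_mul_assoc, mul_smul_comm, mul_assoc]
    constructor <;> module

/-- `ω(a·(a-b)^k·b) = (1+y)·(a(a-b)^k·b - (-y)^{k+1}·b(a-b)^k·a)` in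
`ℤ[y]⟨a,b⟩`. -/
theorem omega_a_mul_pow_sub_mul_b (k : ℕ) :
    omega (Aa * (Aa - Bb) ^ k * Bb) =
      (1 + X : Polynomial ℤ) •
        (Aa * (Aa - Bb) ^ k * Bb -
          ((-X : Polynomial ℤ) ^ (k + 1)) • (Bb * (Aa - Bb) ^ k * Aa)) := by
  simpa only [mul_assoc] using (omega_a_mul_pow_sub_mul_b_and_omega_pow_sub_mul_b k).1
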